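/- arXiv:2407.17092 — 2 statements merged into one kernel-verified Lean document; each statement's English description precedes it below -/
import Mathlib

section
/- Let T > 0 and let f : ℝ^d × [0,T] → ℝ^d be continuous in t and uniformly Lipschitz in x with constant L > 0. For every compact set K ⊆ ℝ^d and every ε > 0 there exist P ∈ ℕ₊ and parameters (W_i, A_i^1, A_i^2, B_i) ∈ ℝ^d × ℝ^{d×d} × ℝ^d × ℝ^d, i = 1,…,P, such that for every z₀ ∈ K, the solution z of ż(t) = f(z(t),t), z(0) = z₀, and the solution x of the SA-NODE ẋ(t) = Σ_{i=1}^P W_i ∘ Σ(A_i^1 x(t) + A_i^2 t + B_i), x(0) = z₀, satisfy sup_{t ∈ [0,T]} ‖z(t) − x(t)‖ ≤ ε, where ‖·‖ is the Euclidean norm. -/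
/-!
Two facts combine. First, SA-NODE fields contain every one-hidden-layer ReLU network
`(x, t) ↦ ∑ᵢ max (ℓᵢ (x, t) + bᵢ) 0 • wᵢ` (neuron `i` gets the row `ℓᵢ` in every coordinate), and
these networks are uniformly dense on compacta: in one variable the piecewise-linear interpolant of
a continuous function is such a network, so every ridge function `φ ∘ ℓ` is a uniform limit of
networks, and the span of the ridge exponentials `exp ∘ ℓ` is a point-separating algebra, hence
dense by Stone–Weierstrass. Second, the flow of a Lipschitz field is stable: by Grönwall, a field
`δ`-close to `f` on a tube around the trajectories from `K` has trajectories within `δ e^{LT} / L`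
of those of `f`, and a continuity argument keeps them inside the tube.
-/

open MeasureTheory Set

noncomputable section

/-- `d`-dimensional Euclidean space. -/
abbrev Euc (n : ℕ) := EuclideanSpace ℝ (Fin n)

/-- The SA-NODE vector field `f_Θ(x,t) = Σ_{i=1}^P W_i ∘ ReLU(A_i^1 x + A_i^2 t + B_i)`. -/
def saNode {d P : ℕ} (W : Fin P → Euc d) (A1 : Fin P → Matrix (Fin d) (Fin d) ℝ)
    (A2 B : Fin P → Euc d) (x : Euc d) (t : ℝ) : Euc d :=
  WithLp.toLp 2 (fun j => ∑ i, W i j * max (Matrix.mulVec (A1 i) x j + A2 i j * t + B i j) 0)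

open Metric

/-- The piecewise-linear interpolant of `g` at the nodes `u 0 ≤ ⋯ ≤ u n`, written as a sum of
ReLU ramps. -/
def reluInterp (g : ℝ → ℝ) (u : ℕ → ℝ) (n : ℕ) (v : ℝ) : ℝ :=
  g (u 0) + ∑ k ∈ Finset.range n,
    slope g (u k) (u (k + 1)) * (max (v - u k) 0 - max (v - u (k + 1)) 0)

section reluInterp

variable {g : ℝ → ℝ} {u : ℕ → ℝ} {v η : ℝ}

theorem reluInterp_succ (n : ℕ) :
    reluInterp g u (n + 1) v = reluInterp g u n v +
      slope g (u n) (u (n + 1)) * (max (v - u n) 0 - max (v - u (n + 1)) 0) := by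
  simp only [reluInterp, Finset.sum_range_succ, add_assoc]

theorem reluInterp_succ_of_le {n : ℕ} (hu : Monotone u) (hv : v ≤ u n) :
    reluInterp g u (n + 1) v = reluInterp g u n v := by
  have hv' : v ≤ u (n + 1) := hv.trans (hu n.le_succ)
  rw [reluInterp_succ, max_eq_right (by linarith), max_eq_right (by linarith)]
  ring

theorem reluInterp_of_ge (hu : Monotone u) {n : ℕ} (hv : u n ≤ v) :
    reluInterp g u n v = g (u n) := by
  induction n with
  | zero => simp [reluInterp]
  | succ n ih =>
    have hn : u n ≤ u (n + 1) := hu n.le_succ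
    rw [reluInterp_succ, ih (hn.trans hv), max_eq_left (by linarith), max_eq_left (by linarith)]
    have := sub_smul_slope g (u n) (u (n + 1))
    simp only [smul_eq_mul, vsub_eq_sub] at this
    linarith

/-- On each cell the interpolant is `g (u k) + slope * (v - u k)`, so its error is at most the
oscillation of `g` on the cell plus the increment of `g` across it. -/
theorem abs_sub_reluInterp_le (hu : Monotone u) (hη : 0 ≤ η) {n : ℕ}
    (hg : ∀ k < n, ∀ x ∈ Icc (u k) (u (k + 1)), ∀ y ∈ Icc (u k) (u (k + 1)), |g x - g y| ≤ η)
    (hv : v ∈ Icc (u 0) (u n)) : |g v - reluInterp g u n v| ≤ 2 * η := by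
  induction n with
  | zero =>
    rw [le_antisymm hv.2 hv.1, reluInterp_of_ge hu le_rfl]
    simpa using hη
  | succ n ih =>
    rcases le_total v (u n) with hvn | hvn
    · rw [reluInterp_succ_of_le hu hvn]
      exact ih (fun k hk => hg k (by omega)) ⟨hv.1, hvn⟩
    have hn : u n ≤ u (n + 1) := hu n.le_succ
    have hcell : v ∈ Icc (u n) (u (n + 1)) := ⟨hvn, hv.2⟩
    have hslope : |slope g (u n) (u (n + 1)) * (v - u n)| ≤ |g (u (n + 1)) - g (u n)| := by
      rw [← vsub_eq_sub (g _), ← sub_smul_slope, smul_eq_mul, abs_mul, abs_mul, mul_comm,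
        abs_of_nonneg (sub_nonneg.2 hvn), abs_of_nonneg (sub_nonneg.2 hn)]
      gcongr
      exact hv.2
    rw [reluInterp_succ, reluInterp_of_ge hu hvn, max_eq_left (by linarith),
      max_eq_right (by linarith [hv.2])]
    calc |g v - (g (u n) + slope g (u n) (u (n + 1)) * (v - u n - 0))|
        ≤ |g v - g (u n)| + |slope g (u n) (u (n + 1)) * (v - u n)| := by
          rw [sub_zero, ← sub_sub]; exact abs_sub _ _
      _ ≤ η + η := by
          gcongr
          · exact hg n n.lt_succ_self _ hcell _ ⟨le_rfl, hn⟩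
          · exact hslope.trans (hg n n.lt_succ_self _ ⟨hn, le_rfl⟩ _ ⟨le_rfl, hn⟩)
      _ = 2 * η := by ring

end reluInterp

section ReLUNetwork

variable (E F : Type*) [NormedAddCommGroup E] [NormedSpace ℝ E] [NormedAddCommGroup F]
  [NormedSpace ℝ F]

/-- One-hidden-layer ReLU networks `x ↦ ∑ᵢ max (ℓᵢ x + bᵢ) 0 • wᵢ`. -/
def reluNet : Submodule ℝ (E → F) :=
  Submodule.span ℝ {φ | ∃ (ℓ : E →L[ℝ] ℝ) (b : ℝ) (w : F), φ = fun x => max (ℓ x + b) 0 • w}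

variable {E F}

theorem relu_smul_mem_reluNet (ℓ : E →L[ℝ] ℝ) (b : ℝ) (w : F) :
    (fun x => max (ℓ x + b) 0 • w) ∈ reluNet E F :=
  Submodule.subset_span ⟨ℓ, b, w, rfl⟩

theorem const_mem_reluNet (w : F) : (fun _ : E => w) ∈ reluNet E F := by
  simpa using relu_smul_mem_reluNet (0 : E →L[ℝ] ℝ) 1 w

theorem continuous_of_mem_reluNet {N : E → F} (hN : N ∈ reluNet E F) : Continuous N := by
  induction hN using Submodule.span_induction with
  | mem φ hφ =>
    obtain ⟨ℓ, b, w, rfl⟩ := hφ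
    fun_prop
  | zero => exact continuous_const
  | add _ _ _ _ h₁ h₂ => exact h₁.add h₂
  | smul c _ _ h => exact h.const_smul c

theorem comp_mem_reluNet {N : ℝ → F} (hN : N ∈ reluNet ℝ F) (ℓ : E →L[ℝ] ℝ) :
    N ∘ ℓ ∈ reluNet E F := by
  change LinearMap.funLeft ℝ F ℓ N ∈ reluNet E F
  refine (Submodule.map_span_le _ _ _).2 ?_ (Submodule.mem_map_of_mem hN)
  rintro _ ⟨m, b, w, rfl⟩
  exact relu_smul_mem_reluNet (m.comp ℓ) b w

theorem smul_const_mem_reluNet {N : E → ℝ} (hN : N ∈ reluNet E ℝ) (w : F) :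
    (fun x => N x • w) ∈ reluNet E F := by
  change LinearMap.compLeft (LinearMap.toSpanSingleton ℝ F w) E N ∈ reluNet E F
  refine (Submodule.map_span_le _ _ _).2 ?_ (Submodule.mem_map_of_mem hN)
  rintro _ ⟨ℓ, b, r, rfl⟩
  convert relu_smul_mem_reluNet ℓ b (r • w) using 2 with x
  simp [smul_smul]

theorem reluInterp_mem_reluNet (g : ℝ → ℝ) (u : ℕ → ℝ) (n : ℕ) :
    reluInterp g u n ∈ reluNet ℝ ℝ := by
  have hunit (c : ℝ) : (fun v : ℝ => max (v - c) 0) ∈ reluNet ℝ ℝ := by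
    simpa [sub_eq_add_neg] using relu_smul_mem_reluNet (ContinuousLinearMap.id ℝ ℝ) (-c) (1 : ℝ)
  have : reluInterp g u n = (fun _ => g (u 0)) + ∑ k ∈ Finset.range n, slope g (u k) (u (k + 1)) •
      ((fun v => max (v - u k) 0) - fun v => max (v - u (k + 1)) 0) := by
    ext v; simp [reluInterp, Finset.sum_apply]
  rw [this]
  exact add_mem (const_mem_reluNet _) (sum_mem fun k _ =>
    Submodule.smul_mem _ _ (sub_mem (hunit _) (hunit _)))

theorem exists_mem_reluNet_near_of_continuousOn_Icc {g : ℝ → ℝ} {a b η : ℝ}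
    (hg : ContinuousOn g (Icc a b)) (hη : 0 < η) :
    ∃ N ∈ reluNet ℝ ℝ, ∀ v ∈ Icc a b, |g v - N v| ≤ η := by
  rcases lt_or_ge b a with hba | hab
  · exact ⟨0, zero_mem _, fun v hv => absurd (hv.1.trans hv.2) (not_le.2 hba)⟩
  obtain ⟨ρ, hρ, hgρ⟩ := Metric.uniformContinuousOn_iff_le.1
    (isCompact_Icc.uniformContinuousOn_of_continuous hg) (η / 2) (half_pos hη)
  set n : ℕ := ⌈(b - a) / ρ⌉₊ + 1
  have hn : 0 < (n : ℝ) := by positivity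
  set h := (b - a) / n
  have hh : 0 ≤ h := by positivity
  have hhρ : h ≤ ρ := by
    rw [div_le_iff₀ hn, ← div_le_iff₀' hρ]
    exact (Nat.le_ceil _).trans (by simp [n])
  set u : ℕ → ℝ := fun k => a + k * h
  have hu : Monotone u := fun i j hij => by simp only [u]; gcongr
  have hu0 : u 0 = a := by simp [u]
  have hun : u n = b := by simp only [u, h]; field_simp; ring
  have hcell : ∀ k < n, ∀ x ∈ Icc (u k) (u (k + 1)), x ∈ Icc a b := fun k hk x hx =>
    ⟨hu0 ▸ (hu (Nat.zero_le k)).trans hx.1, hun ▸ hx.2.trans (hu hk)⟩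
  refine ⟨reluInterp g u n, reluInterp_mem_reluNet g u n, fun v hv => ?_⟩
  have hosc : ∀ k < n, ∀ x ∈ Icc (u k) (u (k + 1)), ∀ y ∈ Icc (u k) (u (k + 1)),
      |g x - g y| ≤ η / 2 := by
    intro k hk x hx y hy
    have hlen : u (k + 1) - u k = h := by simp only [u]; push_cast; ring
    rw [← Real.dist_eq]
    refine hgρ x (hcell k hk x hx) y (hcell k hk y hy) ?_
    rw [Real.dist_eq, abs_le]
    constructor <;> linarith [hx.1, hx.2, hy.1, hy.2]
  have := abs_sub_reluInterp_le hu (half_pos hη).le hosc (by rwa [hu0, hun])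
  linarith

variable (F) in
def reluNetOn (Q : Set E) : Submodule ℝ C(Q, F) :=
  ((reluNet E F).map (LinearMap.funLeft ℝ F (Subtype.val : Q → E))).comap
    (ContinuousMap.coeFnLinearMap ℝ)

theorem mem_reluNetOn {Q : Set E} {G : C(Q, F)} :
    G ∈ reluNetOn F Q ↔ ∃ N ∈ reluNet E F, ∀ q : Q, N q = G q := by
  simp [reluNetOn, funext_iff, LinearMap.funLeft_apply]

section Dense

variable {Q : Set E} [CompactSpace Q]

theorem comp_mem_closure_reluNetOn {φ : ℝ → ℝ} (hφ : Continuous φ) (ℓ : E →L[ℝ] ℝ) :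
    (⟨fun q : Q => φ (ℓ q), by fun_prop⟩ : C(Q, ℝ)) ∈ (reluNetOn ℝ Q).topologicalClosure := by
  have hK : IsCompact (range fun q : Q => ℓ q) := isCompact_range (by fun_prop)
  obtain ⟨a, ha⟩ := hK.bddBelow
  obtain ⟨b, hb⟩ := hK.bddAbove
  rw [← SetLike.mem_coe, Submodule.topologicalClosure_coe, Metric.mem_closure_iff]
  intro ε hε
  obtain ⟨N, hN, hNφ⟩ :=
    exists_mem_reluNet_near_of_continuousOn_Icc (a := a) (b := b) hφ.continuousOn (half_pos hε)
  refine ⟨⟨fun q => N (ℓ q), by have := continuous_of_mem_reluNet hN; fun_prop⟩,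
    mem_reluNetOn.2 ⟨N ∘ ℓ, comp_mem_reluNet hN ℓ, fun q => rfl⟩, ?_⟩
  refine ((ContinuousMap.dist_le (half_pos hε).le).2 fun q => ?_).trans_lt (half_lt_self hε)
  exact hNφ _ ⟨ha ⟨q, rfl⟩, hb ⟨q, rfl⟩⟩

/-- Stone–Weierstrass: the linear span of the ridge exponentials `exp ∘ ℓ` is a subalgebra that
separates points, and each ridge exponential is a uniform limit of ReLU networks. -/
theorem reluNetOn_real_topologicalClosure_eq_top : (reluNetOn ℝ Q).topologicalClosure = ⊤ := by
  let e : (E →L[ℝ] ℝ) → C(Q, ℝ) := fun ℓ => ⟨fun q => Real.exp (ℓ q), by fun_prop⟩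
  let A := Algebra.adjoin ℝ (range e)
  have hmon : (Submonoid.closure (range e) : Set C(Q, ℝ)) ⊆ range e := fun G hG => by
    induction hG using Submonoid.closure_induction with
    | mem G hG => exact hG
    | one => exact ⟨0, by ext; simp [e]⟩
    | mul _ _ _ _ h₁ h₂ =>
      obtain ⟨ℓ₁, rfl⟩ := h₁
      obtain ⟨ℓ₂, rfl⟩ := h₂
      exact ⟨ℓ₁ + ℓ₂, by ext; simp [e, Real.exp_add]⟩
  have hA : (A : Set C(Q, ℝ)) ⊆ (reluNetOn ℝ Q).topologicalClosure := by
    change (Subalgebra.toSubmodule A : Set C(Q, ℝ)) ⊆ _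
    rw [Algebra.adjoin_eq_span, SetLike.coe_subset_coe, Submodule.span_le]
    exact hmon.trans (range_subset_iff.2 (comp_mem_closure_reluNetOn Real.continuous_exp))
  have hsep : A.SeparatesPoints := by
    intro q q' hqq'
    obtain ⟨ℓ, hℓ⟩ :=
      SeparatingDual.exists_separating_of_ne (R := ℝ) (Subtype.coe_injective.ne hqq')
    exact ⟨_, ⟨e ℓ, Algebra.subset_adjoin ⟨ℓ, rfl⟩, rfl⟩, fun h => hℓ (Real.exp_injective h)⟩
  refine eq_top_iff.2 fun G _ => ?_
  have hG : G ∈ A.topologicalClosure := by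
    rw [ContinuousMap.subalgebra_topologicalClosure_eq_top_of_separatesPoints A hsep]; trivial
  rw [← SetLike.mem_coe, Subalgebra.topologicalClosure_coe] at hG
  exact closure_minimal hA (Submodule.isClosed_topologicalClosure _) hG

theorem reluNetOn_topologicalClosure_eq_top [FiniteDimensional ℝ F] :
    (reluNetOn F Q).topologicalClosure = ⊤ := by
  have hsmul (w : F) (g : C(Q, ℝ)) : ContinuousLinearMap.compLeftContinuous ℝ Q
      (ContinuousLinearMap.toSpanSingleton ℝ w) g ∈ (reluNetOn F Q).topologicalClosure := by
    set Φ := ContinuousLinearMap.compLeftContinuous ℝ Q (ContinuousLinearMap.toSpanSingleton ℝ w)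
    have hΦ : Φ '' (reluNetOn ℝ Q) ⊆ reluNetOn F Q := by
      rintro _ ⟨g, hg, rfl⟩
      obtain ⟨N, hN, hNg⟩ := mem_reluNetOn.1 hg
      exact mem_reluNetOn.2 ⟨_, smul_const_mem_reluNet hN w, fun q => by simp [Φ, hNg]⟩
    have hg : g ∈ closure (reluNetOn ℝ Q : Set C(Q, ℝ)) := by
      rw [← Submodule.topologicalClosure_coe, reluNetOn_real_topologicalClosure_eq_top]; trivial
    rw [← SetLike.mem_coe, Submodule.topologicalClosure_coe]
    exact closure_mono hΦ (image_closure_subset_closure_image Φ.continuous ⟨g, hg, rfl⟩)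
  refine eq_top_iff.2 fun G _ => ?_
  let b := Module.finBasis ℝ F
  let coord (j) : F →L[ℝ] ℝ := (ContinuousLinearMap.proj j).comp b.equivFunL.toContinuousLinearMap
  have hG : G = ∑ j, ContinuousLinearMap.compLeftContinuous ℝ Q
      (ContinuousLinearMap.toSpanSingleton ℝ (b j))
      (ContinuousLinearMap.compLeftContinuous ℝ Q (coord j) G) := by
    ext1 q
    simp [coord, b.sum_repr]
  rw [hG]
  exact sum_mem fun j _ => hsmul _ _

end Dense

theorem exists_mem_reluNet_near [FiniteDimensional ℝ F] {Q : Set E} (hQ : IsCompact Q)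
    {G : E → F} (hG : ContinuousOn G Q) {δ : ℝ} (hδ : 0 < δ) :
    ∃ N ∈ reluNet E F, ∀ x ∈ Q, ‖G x - N x‖ < δ := by
  have := isCompact_iff_compactSpace.1 hQ
  have hmem : (⟨fun q : Q => G q, hG.domRestrict⟩ : C(Q, F)) ∈
      closure (reluNetOn F Q : Set C(Q, F)) := by
    rw [← Submodule.topologicalClosure_coe, reluNetOn_topologicalClosure_eq_top]; trivial
  obtain ⟨G', hG', hdist⟩ := Metric.mem_closure_iff.1 hmem δ hδ
  obtain ⟨N, hN, hNG⟩ := mem_reluNetOn.1 hG'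
  refine ⟨N, hN, fun x hx => ?_⟩
  have := (ContinuousMap.dist_apply_le_dist ⟨x, hx⟩).trans_lt hdist
  rwa [dist_eq_norm, ← hNG] at this

end ReLUNetwork

theorem prod_clm_apply_eq_sum {d : ℕ} (ℓ : Euc d × ℝ →L[ℝ] ℝ) (x : Euc d) (t : ℝ) :
    ℓ (x, t) = ∑ k, x k * ℓ (EuclideanSpace.single k 1, 0) + t * ℓ (0, 1) := by
  have hx : (x, t) =
      ∑ k, x k • (EuclideanSpace.single k (1 : ℝ), (0 : ℝ)) + t • ((0 : Euc d), (1 : ℝ)) := by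
    ext j <;> simp [Prod.fst_sum, Prod.snd_sum, Pi.single_apply]
  rw [hx, map_add, map_sum]
  simp only [map_smul, smul_eq_mul]

theorem exists_saNode_eq_of_mem_reluNet {d : ℕ} {N : Euc d × ℝ → Euc d}
    (hN : N ∈ reluNet (Euc d × ℝ) (Euc d)) :
    ∃ P, 0 < P ∧ ∃ (W : Fin P → Euc d) (A1 : Fin P → Matrix (Fin d) (Fin d) ℝ)
      (A2 B : Fin P → Euc d), ∀ x t, N (x, t) = saNode W A1 A2 B x t := by
  obtain ⟨n, c, φ, hφ⟩ := Submodule.mem_span_set'.1 hN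
  choose ℓ b w hφℓ using fun i => (φ i).2
  -- Neuron `0` has output weight `0` and only serves to make `P` positive.
  refine ⟨n + 1, n.succ_pos, Fin.cons 0 fun i => c i • w i,
    Fin.cons 0 fun i => Matrix.of fun _ k => ℓ i (EuclideanSpace.single k 1, 0),
    Fin.cons 0 fun i => WithLp.toLp 2 fun _ => ℓ i (0, 1),
    Fin.cons 0 fun i => WithLp.toLp 2 fun _ => b i, fun x t => ?_⟩
  have hℓ (i : Fin n) := prod_clm_apply_eq_sum (ℓ i) x t
  rw [← hφ]
  ext j
  simp [saNode, Fin.sum_univ_succ, hφℓ, hℓ, Matrix.mulVec, dotProduct, mul_comm, mul_assoc]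

theorem continuousOn_uncurry_of_lipschitz {E : Type*} [SeminormedAddCommGroup E] {f : E → ℝ → E}
    {L : ℝ} {s : Set ℝ} (hcont : ∀ x, ContinuousOn (f x) s)
    (hlip : ∀ x y : E, ∀ t ∈ s, ‖f x t - f y t‖ ≤ L * ‖x - y‖) :
    ContinuousOn (fun p : E × ℝ => f p.1 p.2) (univ ×ˢ s) :=
  continuousOn_prod_of_continuousOn_lipschitzOnWith _ L.toNNReal (fun x _ => hcont x)
    fun t ht => LipschitzOnWith.of_dist_le_mul fun x _ y _ => by
      rw [dist_eq_norm, dist_eq_norm]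
      exact (hlip x y t ht).trans (by gcongr; exact Real.le_coe_toNNReal L)

section ODE

variable {E : Type*} [NormedAddCommGroup E] [NormedSpace ℝ E] {f : E → ℝ → E} {L T : ℝ}

theorem gronwallBound_zero_le (hL : 0 < L) {δ t : ℝ} (hδ : 0 ≤ δ) (ht : t ≤ T) :
    gronwallBound 0 L δ t ≤ δ / L * Real.exp (L * T) := by
  simp only [gronwallBound_of_K_ne_0 hL.ne', zero_mul, zero_add]
  have : Real.exp (L * t) ≤ Real.exp (L * T) := by gcongr
  gcongr
  linarith

theorem norm_sub_le_gronwallBound_of_approx (hL : 0 ≤ L)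
    (hlip : ∀ x y : E, ∀ t ∈ Icc 0 T, ‖f x t - f y t‖ ≤ L * ‖x - y‖)
    {z x x' : ℝ → E} {δ τ : ℝ} (hτ : τ ∈ Icc 0 T)
    (hz : ∀ t ∈ Icc 0 τ, HasDerivAt z (f (z t) t) t) (hx : ∀ t ∈ Icc 0 τ, HasDerivAt x (x' t) t)
    (hx' : ∀ t ∈ Ico 0 τ, ‖x' t - f (x t) t‖ ≤ δ) (h0 : z 0 = x 0) :
    ‖z τ - x τ‖ ≤ gronwallBound 0 L δ τ := by
  have hcont {y y' : ℝ → E} (hy : ∀ t ∈ Icc 0 τ, HasDerivAt y (y' t) t) :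
      ContinuousOn y (Icc 0 τ) := fun t ht => (hy t ht).continuousAt.continuousWithinAt
  have hL' : (L.toNNReal : ℝ) = L := Real.coe_toNNReal L hL
  have hv : ∀ t ∈ Ico 0 τ, LipschitzOnWith L.toNNReal (fun y => f y t) univ := fun t ht =>
    LipschitzOnWith.of_dist_le_mul fun a _ b _ => by
      simpa [dist_eq_norm, hL'] using hlip a b t ⟨ht.1, ht.2.le.trans hτ.2⟩
  have := dist_le_of_approx_trajectories_ODE_of_mem hv (hcont hz)
    (fun t ht => (hz t (Ico_subset_Icc_self ht)).hasDerivWithinAt) (fun t _ => (dist_self _).le)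
    (fun _ _ => trivial) (hcont hx) (fun t ht => (hx t (Ico_subset_Icc_self ht)).hasDerivWithinAt)
    (fun t ht => (dist_eq_norm _ _).trans_le (hx' t ht)) (fun _ _ => trivial)
    (by rw [h0, dist_self]) τ ⟨hτ.1, le_rfl⟩
  simpa [dist_eq_norm, hL'] using this

/-- Continuous induction: the first time at which `c ≤ φ` would contradict `h`. -/
theorem ContinuousOn.lt_of_forall_Ico_lt {φ : ℝ → ℝ} {a b c : ℝ} (hφ : ContinuousOn φ (Icc a b))
    (h : ∀ t ∈ Icc a b, (∀ s ∈ Ico a t, φ s < c) → φ t < c) {t : ℝ} (ht : t ∈ Icc a b) :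
    φ t < c := by
  by_contra! hct
  set A := Icc a b ∩ φ ⁻¹' Ici c
  have hbdd : BddBelow A := ⟨a, fun s hs => hs.1.1⟩
  have hmin : sInf A ∈ A :=
    (hφ.preimage_isClosed_of_isClosed isClosed_Icc isClosed_Ici).csInf_mem ⟨t, ht, hct⟩ hbdd
  refine (h _ hmin.1 fun s hs => ?_).not_ge hmin.2
  by_contra! hcs
  exact hs.2.not_ge (csInf_le hbdd ⟨⟨hs.1, hs.2.le.trans hmin.1.2⟩, hcs⟩)

theorem exists_norm_sub_initial_le_of_solution (hL : 0 < L)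
    (hcont : ∀ x, ContinuousOn (f x) (Icc 0 T))
    (hlip : ∀ x y : E, ∀ t ∈ Icc 0 T, ‖f x t - f y t‖ ≤ L * ‖x - y‖) {K : Set E}
    (hK : IsCompact K) :
    ∃ ρ, ∀ z₀ ∈ K, ∀ z : ℝ → E, z 0 = z₀ → (∀ t ∈ Icc 0 T, HasDerivAt z (f (z t) t) t) →
      ∀ t ∈ Icc 0 T, ‖z t - z₀‖ ≤ ρ := by
  obtain ⟨M, hM⟩ := (hK.prod isCompact_Icc).exists_bound_of_continuousOn
    ((continuousOn_uncurry_of_lipschitz hcont hlip).mono (prod_mono (subset_univ K) le_rfl))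
  refine ⟨max M 0 / L * Real.exp (L * T), fun z₀ hz₀ z hz0 hz t ht => ?_⟩
  have hf₀ (s : ℝ) (hs : s ∈ Ico 0 t) : ‖0 - f z₀ s‖ ≤ max M 0 := by
    rw [zero_sub, norm_neg]
    exact (hM (z₀, s) ⟨hz₀, hs.1, hs.2.le.trans ht.2⟩).trans (le_max_left _ _)
  calc ‖z t - z₀‖ ≤ gronwallBound 0 L (max M 0) t :=
        norm_sub_le_gronwallBound_of_approx hL.le hlip ht
          (fun s hs => hz s ⟨hs.1, hs.2.trans ht.2⟩) (fun s _ => hasDerivAt_const s z₀) hf₀ hz0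
    _ ≤ _ := gronwallBound_zero_le hL (le_max_right _ _) ht.2

theorem exists_forall_norm_sub_lt_of_approx_field (hL : 0 < L)
    (hcont : ∀ x, ContinuousOn (f x) (Icc 0 T))
    (hlip : ∀ x y : E, ∀ t ∈ Icc 0 T, ‖f x t - f y t‖ ≤ L * ‖x - y‖) {K : Set E}
    (hK : IsCompact K) {ε : ℝ} (hε : 0 < ε) :
    ∃ δ > 0, ∃ r, ∀ g : E → ℝ → E,
      (∀ y ∈ cthickening r K, ∀ t ∈ Icc 0 T, ‖g y t - f y t‖ ≤ δ) →
      ∀ z₀ ∈ K, ∀ z x : ℝ → E, z 0 = z₀ → x 0 = z₀ →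
        (∀ t ∈ Icc 0 T, HasDerivAt z (f (z t) t) t) →
        (∀ t ∈ Icc 0 T, HasDerivAt x (g (x t) t) t) → ∀ t ∈ Icc 0 T, ‖z t - x t‖ < ε := by
  obtain ⟨ρ, hρ⟩ := exists_norm_sub_initial_le_of_solution hL hcont hlip hK
  set δ := ε * L / (2 * Real.exp (L * T))
  refine ⟨δ, by positivity, ρ + ε, fun g hg z₀ hz₀ z x hz0 hx0 hz hx t ht => ?_⟩
  refine ContinuousOn.lt_of_forall_Ico_lt (φ := fun t => ‖z t - x t‖)
    (fun t ht => ((hz t ht).continuousAt.sub (hx t ht).continuousAt).norm.continuousWithinAt)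
    (fun t ht hlt => ?_) ht
  have hsub : Icc 0 t ⊆ Icc 0 T := Icc_subset_Icc_right ht.2
  have hxK (s : ℝ) (hs : s ∈ Ico 0 t) : x s ∈ cthickening (ρ + ε) K := by
    refine mem_cthickening_of_dist_le _ z₀ _ K hz₀ ?_
    rw [dist_eq_norm, norm_sub_rev]
    calc ‖z₀ - x s‖ ≤ ‖z₀ - z s‖ + ‖z s - x s‖ := norm_sub_le_norm_sub_add_norm_sub _ _ _
      _ ≤ ρ + ε := by
        rw [norm_sub_rev]
        exact add_le_add (hρ z₀ hz₀ z hz0 hz s (hsub (Ico_subset_Icc_self hs))) (hlt s hs).le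
  calc ‖z t - x t‖ ≤ gronwallBound 0 L δ t :=
        norm_sub_le_gronwallBound_of_approx hL.le hlip ht (fun s hs => hz s (hsub hs))
          (fun s hs => hx s (hsub hs))
          (fun s hs => hg _ (hxK s hs) s (hsub (Ico_subset_Icc_self hs))) (hz0.trans hx0.symm)
    _ ≤ δ / L * Real.exp (L * T) := gronwallBound_zero_le hL (by positivity) ht.2
    _ = ε / 2 := by simp only [δ]; field_simp
    _ < ε := half_lt_self hε

end ODE

theorem sa_node_universal_approximation_general
    (d : ℕ) (T : ℝ)
    (f : Euc d → ℝ → Euc d)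
    (L : ℝ) (hL : 0 < L)
    (hcont : ∀ x, ContinuousOn (f x) (Icc 0 T))
    (hlip : ∀ x y : Euc d, ∀ t ∈ Icc (0:ℝ) T, ‖f x t - f y t‖ ≤ L * ‖x - y‖)
    (K : Set (Euc d)) (hK : IsCompact K)
    (ε : ℝ) (hε : 0 < ε) :
    ∃ (P : ℕ), 0 < P ∧
      ∃ (W : Fin P → Euc d) (A1 : Fin P → Matrix (Fin d) (Fin d) ℝ)
        (A2 B : Fin P → Euc d),
        ∀ z₀ ∈ K, ∀ z x : ℝ → Euc d,
          z 0 = z₀ → x 0 = z₀ →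
          (∀ t ∈ Icc (0:ℝ) T, HasDerivAt z (f (z t) t) t) →
          (∀ t ∈ Icc (0:ℝ) T, HasDerivAt x (saNode W A1 A2 B (x t) t) t) →
          ∀ t ∈ Icc (0:ℝ) T, ‖z t - x t‖ ≤ ε := by
  obtain ⟨δ, hδ, r, hstable⟩ := exists_forall_norm_sub_lt_of_approx_field hL hcont hlip hK hε
  obtain ⟨N, hN, hNf⟩ := exists_mem_reluNet_near (hK.cthickening.prod isCompact_Icc)
    ((continuousOn_uncurry_of_lipschitz hcont hlip).mono (prod_mono (subset_univ _) le_rfl)) hδ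
  obtain ⟨P, hP, W, A1, A2, B, hNsa⟩ := exists_saNode_eq_of_mem_reluNet hN
  refine ⟨P, hP, W, A1, A2, B, fun z₀ hz₀ z x hz0 hx0 hz hx t ht =>
    (hstable (saNode W A1 A2 B) (fun y hy s hs => ?_) z₀ hz₀ z x hz0 hx0 hz hx t ht).le⟩
  rw [← hNsa, norm_sub_rev]
  exact (hNf (y, s) ⟨hy, hs⟩).le

/-- Theorem 2.2, universal approximation of SA-NODEs:
for `f` continuous in `t` and uniformly Lipschitz in `x`, any compact set `K` of initial data
and any `ε > 0`, there is an SA-NODE whose trajectories uniformly `ε`-approximate those of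
`ż = f(z,t)` on `[0,T]`. -/
theorem sa_node_universal_approximation
    (d : ℕ) (T : ℝ) (hT : 0 < T)
    (f : Euc d → ℝ → Euc d)
    (L : ℝ) (hL : 0 < L)
    (hcont : ∀ x, ContinuousOn (f x) (Icc 0 T))
    (hlip : ∀ x y : Euc d, ∀ t ∈ Icc (0:ℝ) T, ‖f x t - f y t‖ ≤ L * ‖x - y‖)
    (K : Set (Euc d)) (hK : IsCompact K)
    (ε : ℝ) (hε : 0 < ε) :
    ∃ (P : ℕ), 0 < P ∧
      ∃ (W : Fin P → Euc d) (A1 : Fin P → Matrix (Fin d) (Fin d) ℝ)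
        (A2 B : Fin P → Euc d),
        ∀ z₀ ∈ K, ∀ z x : ℝ → Euc d,
          z 0 = z₀ → x 0 = z₀ →
          (∀ t ∈ Icc (0:ℝ) T, HasDerivAt z (f (z t) t) t) →
          (∀ t ∈ Icc (0:ℝ) T, HasDerivAt x (saNode W A1 A2 B (x t) t) t) →
          ∀ t ∈ Icc (0:ℝ) T, ‖z t - x t‖ ≤ ε :=
  sa_node_universal_approximation_general d T f L hL hcont hlip K hK ε hε
end
end

section
/- Let T > 0 and let f : ℝ^d × [0,T] → ℝ^d satisfy Assumption 1 with Lipschitz constant L. For s ∈ [0,T] let φ_s : ℝ^d → ℝ^d be the flow map sending z₀ to the time-s value of the solution of ż = f(z,t), z(0) = z₀. Then for every compact set K ⊆ ℝ^d, every s ∈ [0,T], and every measurable h : ℝ^d → [0,∞], one has ∫_K h(φ_s(z)) dz ≤ exp(s L d) ∫_{φ_s(K)} h(x) dx, where both integrals are with respect to Lebesgue measure. -/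
open MeasureTheory Set
open scoped NNReal ENNReal

/-!
Grönwall's inequality, applied to the flow forwards and to the time-reversed flow backwards,
shows that `φ_s` is `e^{sL}`-Lipschitz and `e^{sL}`-antilipschitz. A `C`-antilipschitz map
shrinks the `d`-dimensional Hausdorff measure, and hence every Haar measure, by at most a factor
`C^d`; so the push-forward of Lebesgue measure on `K` under `φ_s` is at most `e^{sLd}` times
Lebesgue measure on `φ_s(K)`, which is the claim after integrating `h`.
-/

noncomputable section

section Flow

variable {E : Type*} [NormedAddCommGroup E] [NormedSpace ℝ E]

theorem dist_le_mul_exp_of_hasDerivAt_of_lipschitzWith {v : ℝ → E → E} {K : ℝ≥0} {a b : ℝ}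
    (hab : a ≤ b) (hv : ∀ t ∈ Ico a b, LipschitzWith K (v t)) {γ₁ γ₂ : ℝ → E}
    (hγ₁ : ∀ t ∈ Icc a b, HasDerivAt γ₁ (v t (γ₁ t)) t)
    (hγ₂ : ∀ t ∈ Icc a b, HasDerivAt γ₂ (v t (γ₂ t)) t) :
    dist (γ₁ b) (γ₂ b) ≤ dist (γ₁ a) (γ₂ a) * Real.exp (K * (b - a)) :=
  dist_le_of_trajectories_ODE_of_mem (s := fun _ => univ) (fun t ht => (hv t ht).lipschitzOnWith)
    (fun t ht => (hγ₁ t ht).continuousAt.continuousWithinAt)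
    (fun t ht => (hγ₁ t (Ico_subset_Icc_self ht)).hasDerivWithinAt) (fun _ _ => mem_univ _)
    (fun t ht => (hγ₂ t ht).continuousAt.continuousWithinAt)
    (fun t ht => (hγ₂ t (Ico_subset_Icc_self ht)).hasDerivWithinAt) (fun _ _ => mem_univ _)
    le_rfl b ⟨hab, le_rfl⟩

variable {f : E → ℝ → E} {φ : ℝ → E → E} {K : ℝ≥0} {s : ℝ}

theorem flow_lipschitzWith (hf : ∀ t ∈ Icc 0 s, LipschitzWith K (fun x => f x t))
    (hφ0 : ∀ z, φ 0 z = z) (hφ : ∀ z, ∀ t ∈ Icc 0 s, HasDerivAt (φ · z) (f (φ t z) t) t)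
    (hs : 0 ≤ s) : LipschitzWith (Real.exp (K * s)).toNNReal (φ s) :=
  LipschitzWith.of_dist_le_mul fun x y => by
    have := dist_le_mul_exp_of_hasDerivAt_of_lipschitzWith (v := fun t x => f x t) hs
      (fun t ht => hf t (Ico_subset_Icc_self ht)) (hφ x) (hφ y)
    rwa [hφ0, hφ0, sub_zero, mul_comm, ← Real.coe_toNNReal _ (Real.exp_nonneg _)] at this

theorem flow_antilipschitzWith (hf : ∀ t ∈ Icc 0 s, LipschitzWith K (fun x => f x t))
    (hφ0 : ∀ z, φ 0 z = z) (hφ : ∀ z, ∀ t ∈ Icc 0 s, HasDerivAt (φ · z) (f (φ t z) t) t)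
    (hs : 0 ≤ s) : AntilipschitzWith (Real.exp (K * s)).toNNReal (φ s) :=
  AntilipschitzWith.of_le_mul_dist fun x y => by
    have hrev : ∀ t ∈ Icc 0 s, s - t ∈ Icc 0 s := fun t ht =>
      ⟨sub_nonneg.2 ht.2, sub_le_self _ ht.1⟩
    have := dist_le_mul_exp_of_hasDerivAt_of_lipschitzWith (v := fun t x => -f x (s - t)) hs
      (fun t ht => (hf _ (hrev t (Ico_subset_Icc_self ht))).neg)
      (fun t ht => (hφ x _ (hrev t ht)).comp_const_sub s t)
      (fun t ht => (hφ y _ (hrev t ht)).comp_const_sub s t)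
    rwa [sub_zero, sub_self, hφ0, hφ0, mul_comm,
      ← Real.coe_toNNReal _ (Real.exp_nonneg _)] at this

end Flow

theorem AntilipschitzWith.addHaar_le_mul_addHaar_image {E : Type*} [NormedAddCommGroup E]
    [NormedSpace ℝ E] [FiniteDimensional ℝ E] [MeasurableSpace E] [BorelSpace E]
    (μ : Measure E) [μ.IsAddHaarMeasure] {C : ℝ≥0} {g : E → E} (hg : AntilipschitzWith C g)
    (A : Set E) : μ A ≤ (C : ℝ≥0∞) ^ Module.finrank ℝ E * μ (g '' A) := by
  have hμ := Measure.isAddLeftInvariant_eq_smul μ μH[Module.finrank ℝ E]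
  set c := μ.addHaarScalarFactor μH[Module.finrank ℝ E]
  have hH := hg.le_hausdorffMeasure_image (Nat.cast_nonneg (Module.finrank ℝ E)) A
  rw [ENNReal.rpow_natCast] at hH
  calc μ A = c * μH[Module.finrank ℝ E] A := by rw [hμ]; rfl
    _ ≤ c * ((C : ℝ≥0∞) ^ Module.finrank ℝ E * μH[Module.finrank ℝ E] (g '' A)) := by gcongr
    _ = (C : ℝ≥0∞) ^ Module.finrank ℝ E * μ (g '' A) := by
      rw [hμ, Measure.smul_apply, ENNReal.smul_def, smul_eq_mul]; ring

theorem setLIntegral_comp_le_mul_setLIntegral_image {α β : Type*} [MeasurableSpace α]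
    [MeasurableSpace β] {μ : Measure α} {ν : Measure β} {g : α → β} (hg : Measurable g)
    {c : ℝ≥0∞} (hμν : ∀ A, μ A ≤ c * ν (g '' A)) {h : β → ℝ≥0∞} (hh : Measurable h)
    (K : Set α) : ∫⁻ z in K, h (g z) ∂μ ≤ c * ∫⁻ x in g '' K, h x ∂ν := by
  have hmap : (μ.restrict K).map g ≤ c • ν.restrict (g '' K) := by
    refine Measure.le_iff.2 fun A hA => ?_
    rw [Measure.map_apply hg hA, Measure.restrict_apply (hg hA), Measure.smul_apply,
      Measure.restrict_apply hA, smul_eq_mul]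
    refine (hμν _).trans (mul_le_mul_right (measure_mono ?_) c)
    rintro _ ⟨z, ⟨hzA, hzK⟩, rfl⟩
    exact ⟨hzA, z, hzK, rfl⟩
  calc ∫⁻ z in K, h (g z) ∂μ = ∫⁻ x, h x ∂(μ.restrict K).map g := (lintegral_map hh hg).symm
    _ ≤ ∫⁻ x, h x ∂(c • ν.restrict (g '' K)) := lintegral_mono' hmap le_rfl
    _ = c * ∫⁻ x in g '' K, h x ∂ν := lintegral_smul_measure _ _

theorem flow_change_of_variables_general
    (d : ℕ) (T L : ℝ) (hL : 0 < L)
    (f : Euc d → ℝ → Euc d)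
    (hlip : ∀ x y : Euc d, ∀ t ∈ Icc (0:ℝ) T, ‖f x t - f y t‖ ≤ L * ‖x - y‖)
    (φ : ℝ → Euc d → Euc d)
    (hφ0 : ∀ z₀, φ 0 z₀ = z₀)
    (hφ : ∀ z₀, ∀ t ∈ Icc (0:ℝ) T, HasDerivAt (fun s => φ s z₀) (f (φ t z₀) t) t)
    (K : Set (Euc d))
    (s : ℝ) (hs : s ∈ Icc (0:ℝ) T)
    (h : Euc d → ENNReal) (hmeas : Measurable h) :
    (∫⁻ z in K, h (φ s z)) ≤
      ENNReal.ofReal (Real.exp (s * L * d)) * ∫⁻ x in (φ s) '' K, h x := by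
  have hLK : (L.toNNReal : ℝ) = L := Real.coe_toNNReal L hL.le
  have hTs : ∀ t ∈ Icc 0 s, t ∈ Icc 0 T := fun t ht => ⟨ht.1, ht.2.trans hs.2⟩
  have hf : ∀ t ∈ Icc 0 s, LipschitzWith L.toNNReal (fun x => f x t) := fun t ht =>
    LipschitzWith.of_dist_le_mul fun x y => by
      simpa only [dist_eq_norm, hLK] using hlip x y t (hTs t ht)
  have hφs : ∀ z, ∀ t ∈ Icc 0 s, HasDerivAt (φ · z) (f (φ t z) t) t := fun z t ht =>
    hφ z t (hTs t ht)
  have hconst : ((Real.exp (L.toNNReal * s)).toNNReal : ℝ≥0∞) ^ Module.finrank ℝ (Euc d) =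
      ENNReal.ofReal (Real.exp (s * L * d)) := by
    rw [finrank_euclideanSpace_fin, ← ENNReal.ofReal.eq_def, ← ENNReal.ofReal_pow
      (Real.exp_nonneg _), ← Real.exp_nat_mul, hLK]
    ring_nf
  rw [← hconst]
  exact setLIntegral_comp_le_mul_setLIntegral_image
    (flow_lipschitzWith hf hφ0 hφs hs.1).continuous.measurable
    ((flow_antilipschitzWith hf hφ0 hφs hs.1).addHaar_le_mul_addHaar_image volume) hmeas K

/-- change-of-variables estimate in Step 4 of the proof of Theorem 2.4:
for the flow `φ_s` of `ż = f(z,t)` with `f` `L`-Lipschitz in `x`, any compact `K`, any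
`s ∈ [0,T]` and any measurable `h : ℝ^d → [0,∞]`,
`∫_K h(φ_s(z)) dz ≤ e^{sLd} ∫_{φ_s(K)} h(x) dx`. -/
theorem flow_change_of_variables
    (d : ℕ) (T L : ℝ) (hT : 0 < T) (hL : 0 < L)
    (f : Euc d → ℝ → Euc d)
    (hcont : ∀ x, ContinuousOn (f x) (Icc 0 T))
    (hlip : ∀ x y : Euc d, ∀ t ∈ Icc (0:ℝ) T, ‖f x t - f y t‖ ≤ L * ‖x - y‖)
    (φ : ℝ → Euc d → Euc d)
    (hφ0 : ∀ z₀, φ 0 z₀ = z₀)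
    (hφ : ∀ z₀, ∀ t ∈ Icc (0:ℝ) T, HasDerivAt (fun s => φ s z₀) (f (φ t z₀) t) t)
    (K : Set (Euc d)) (hK : IsCompact K)
    (s : ℝ) (hs : s ∈ Icc (0:ℝ) T)
    (h : Euc d → ENNReal) (hmeas : Measurable h) :
    (∫⁻ z in K, h (φ s z)) ≤
      ENNReal.ofReal (Real.exp (s * L * d)) * ∫⁻ x in (φ s) '' K, h x :=
  flow_change_of_variables_general d T L hL f hlip φ hφ0 hφ K s hs h hmeas
end
end
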